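/- Let (Y_1, Y_2, Y_3, …) be an exchangeable sequence of real random variables on a probability space, let r ∈ ℕ, r ≥ 1, and suppose E[|Y_1|^r] < ∞. Let Y_∞ be the almost sure limit of N^{−1}(Y_1 + ⋯ + Y_N) (which exists by the law of large numbers for exchangeable sequences). Then E[Y_∞^r] = E[Y_1 · Y_2 ⋯ Y_r]. -/

import Mathlib

/-!
Let `g_N = (N⁻¹ ∑_{k<N} Y_k)^r`. Expanding the power, `E[g_N]` is `N^{-r}` times the sum over all
maps `p : Fin r → Fin N` of `E[∏ᵢ Y_{p i}]`. By exchangeability every injective `p` contributes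
exactly `E[Y_0 ⋯ Y_{r-1}]`, and the other `N^r - N(N-1)⋯(N-r+1) = o(N^r)` terms are bounded by
`r E|Y_0|^r`, so `E[g_N] → E[Y_0 ⋯ Y_{r-1}]`. On the other hand `|g_N| ≤ N⁻¹ ∑_{k<N} |Y_k|^r`, an
average of identically distributed integrable variables, so `(g_N)` is uniformly integrable and
Vitali's theorem gives `E[g_N] → E[Y_∞^r]`.
-/

open MeasureTheory Filter Real

/-- A sequence `Y` of real random variables is exchangeable under `P` if its joint law is
invariant under every finitely supported permutation of the indices (equivalently, under every
permutation of the first `N` indices, for every `N`). -/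
def IsExchangeable {Ω : Type*} [MeasurableSpace Ω] (P : MeasureTheory.Measure Ω)
    (Y : ℕ → Ω → ℝ) : Prop :=
  ∀ σ : Equiv.Perm ℕ, {n | σ n ≠ n}.Finite →
    MeasureTheory.Measure.map (fun ω => fun n => Y (σ n) ω) P =
      MeasureTheory.Measure.map (fun ω => fun n => Y n ω) P

open ProbabilityTheory Topology Finset Function

lemma abs_prod_le_sum_abs_pow {ι : Type*} [Fintype ι] [Nonempty ι] (a : ι → ℝ) :
    |∏ i, a i| ≤ ∑ i, |a i| ^ Fintype.card ι := by
  obtain ⟨j, -, hj⟩ := exists_max_image univ (fun i => |a i|) univ_nonempty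
  calc |∏ i, a i| = ∏ i, |a i| := abs_prod _ _
    _ ≤ ∏ _i, |a j| := prod_le_prod (fun i _ => abs_nonneg _) hj
    _ = |a j| ^ Fintype.card ι := by rw [prod_const, card_univ]
    _ ≤ ∑ i, |a i| ^ Fintype.card ι :=
        single_le_sum (f := fun i => |a i| ^ Fintype.card ι) (fun i _ => by positivity)
          (mem_univ j)

lemma abs_mean_pow_le_mean_abs_pow (x : ℕ → ℝ) (N : ℕ) {r : ℕ} (hr : r ≠ 0) :
    |((∑ k ∈ range N, x k) / N) ^ r| ≤ (∑ k ∈ range N, |x k| ^ r) / N := by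
  rcases N.eq_zero_or_pos with rfl | hN
  · simp [hr]
  obtain ⟨m, rfl⟩ := Nat.exists_eq_add_one_of_ne_zero hr
  have hjensen := pow_sum_div_card_le_sum_pow (s := range N) (f := fun k => |x k|)
    (fun k _ => abs_nonneg _) m
  rw [card_range] at hjensen
  calc |((∑ k ∈ range N, x k) / N) ^ (m + 1)|
      = |∑ k ∈ range N, x k| ^ (m + 1) / N ^ m / N := by
        rw [abs_pow, abs_div, Nat.abs_cast, div_pow, div_div, ← pow_succ]
    _ ≤ (∑ k ∈ range N, |x k|) ^ (m + 1) / N ^ m / N := by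
        gcongr; exact abs_sum_le_sum_abs _ _
    _ ≤ (∑ k ∈ range N, |x k| ^ (m + 1)) / N := by gcongr

lemma mean_pow_eq_inv_pow_mul_sum (x : ℕ → ℝ) (N r : ℕ) :
    ((∑ k ∈ range N, x k) / N) ^ r = ((N : ℝ) ^ r)⁻¹ * ∑ p : Fin r → Fin N, ∏ i, x (p i) := by
  rw [div_pow, div_eq_inv_mul, ← Fin.sum_univ_eq_sum_range, sum_pow', Fintype.piFinset_univ]

lemma card_filter_not_injective (r N : ℕ) :
    (#{p : Fin r → Fin N | ¬Injective p} : ℝ) = N ^ r - N.descFactorial r := by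
  have hinj : #{p : Fin r → Fin N | Injective p} = N.descFactorial r := by
    rw [← Fintype.card_subtype, Fintype.card_congr (Equiv.subtypeInjectiveEquivEmbedding _ _),
      Fintype.card_embedding_eq, Fintype.card_fin, Fintype.card_fin]
  have hsplit := card_filter_add_card_filter_not (s := univ)
    (p := fun p : Fin r → Fin N => Injective p)
  rw [hinj, card_univ, Fintype.card_fun, Fintype.card_fin, Fintype.card_fin] at hsplit
  rw [eq_sub_iff_add_eq, ← Nat.cast_pow, ← hsplit]
  push_cast; ring

lemma tendsto_inv_pow_mul_sum_of_injective {r : ℕ} {m : (Fin r → ℕ) → ℝ} {a B : ℝ}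
    (hinj : ∀ p, Injective p → m p = a) (hB : ∀ p, |m p - a| ≤ B) :
    Tendsto (fun N : ℕ => ((N : ℝ) ^ r)⁻¹ * ∑ p : Fin r → Fin N, m (fun i => p i))
      atTop (𝓝 a) := by
  have hpow : ∀ᶠ N : ℕ in atTop, (N : ℝ) ^ r ≠ 0 :=
    eventually_atTop.2 ⟨1, fun N hN => pow_ne_zero _ (by positivity)⟩
  have hdesc : Tendsto (fun N : ℕ => (N.descFactorial r : ℝ) / N ^ r) atTop (𝓝 1) :=
    (Asymptotics.isEquivalent_iff_tendsto_one hpow).1 (isEquivalent_descFactorial r)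
  have hbound : ∀ᶠ N : ℕ in atTop,
      ‖((N : ℝ) ^ r)⁻¹ * ∑ p : Fin r → Fin N, m (fun i => p i) - a‖
        ≤ (1 - (N.descFactorial r : ℝ) / N ^ r) * B := by
    filter_upwards [hpow] with N hN
    have hmean : ((N : ℝ) ^ r)⁻¹ * ∑ p : Fin r → Fin N, m (fun i => p i) - a
        = ((N : ℝ) ^ r)⁻¹ * ∑ p : Fin r → Fin N, (m (fun i => p i) - a) := by
      rw [sum_sub_distrib, sum_const, card_univ, Fintype.card_fun, Fintype.card_fin,
        Fintype.card_fin, nsmul_eq_mul, Nat.cast_pow, mul_sub, inv_mul_cancel_left₀ hN]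
    have hnoninj : ∑ p : Fin r → Fin N, |m (fun i => p i) - a|
        = ∑ p ∈ {p : Fin r → Fin N | ¬Injective p}, |m (fun i => p i) - a| := by
      refine (sum_filter_of_ne (p := fun p : Fin r → Fin N => ¬Injective p)
        fun p _ hp hinjp => hp ?_).symm
      rw [hinj (fun i => p i) (Fin.val_injective.comp hinjp), sub_self, abs_zero]
    calc ‖((N : ℝ) ^ r)⁻¹ * ∑ p : Fin r → Fin N, m (fun i => p i) - a‖
        = ((N : ℝ) ^ r)⁻¹ * |∑ p : Fin r → Fin N, (m (fun i => p i) - a)| := by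
          rw [hmean, Real.norm_eq_abs, abs_mul, abs_of_nonneg (by positivity)]
      _ ≤ ((N : ℝ) ^ r)⁻¹ * ((N ^ r - N.descFactorial r) * B) := by
          gcongr
          refine (abs_sum_le_sum_abs _ _).trans ?_
          rw [hnoninj, ← card_filter_not_injective]
          simpa using sum_le_card_nsmul _ _ _ fun p _ => hB _
      _ = (1 - (N.descFactorial r : ℝ) / N ^ r) * B := by field_simp
  have hlim : Tendsto (fun N : ℕ => (1 - (N.descFactorial r : ℝ) / N ^ r) * B) atTop (𝓝 0) := by
    simpa using (hdesc.const_sub 1).mul_const B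
  exact tendsto_iff_norm_sub_tendsto_zero.2
    (squeeze_zero' (.of_forall fun _ => norm_nonneg _) hbound hlim)

lemma exists_perm_finite_eq_of_injective {r : ℕ} (p : Fin r → ℕ) (hp : Injective p) :
    ∃ σ : Equiv.Perm ℕ, {n | σ n ≠ n}.Finite ∧ ∀ i : Fin r, σ i = p i := by
  induction r with
  | zero => exact ⟨1, by simp, finZeroElim⟩
  | succ r ih =>
    obtain ⟨σ, hσ, hσp⟩ := ih (p ∘ Fin.castSucc) (hp.comp (Fin.castSucc_injective r))
    set c := σ.symm (p (Fin.last r))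
    refine ⟨σ * Equiv.swap r c, (hσ.union (Set.toFinite {r, c})).subset fun n hn => ?_,
      Fin.lastCases ?_ fun i => ?_⟩
    · by_contra hmem
      simp only [Set.mem_union, Set.mem_ofPred_eq, Set.mem_insert_iff, Set.mem_singleton_iff,
        not_or, not_not] at hmem
      simp [Equiv.swap_apply_of_ne_of_ne hmem.2.1 hmem.2.2, hmem.1] at hn
    · simp [c]
    · have hic : (i : ℕ) ≠ c := fun h => by
        have := congrArg σ h
        simp only [Equiv.apply_symm_apply, c, hσp, comp_apply] at this
        exact (Fin.castSucc_lt_last i).ne (hp this)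
      simpa [Equiv.swap_apply_of_ne_of_ne i.isLt.ne hic] using hσp i

namespace MeasureTheory

variable {α E : Type*} {m : MeasurableSpace α} {μ : Measure α} [NormedAddCommGroup E]

lemma UniformIntegrable.of_norm_le {ι : Type*} {f g : ι → α → E} {p : ENNReal}
    (hf : UniformIntegrable f p μ) (hg : ∀ i, AEStronglyMeasurable (g i) μ)
    (hgf : ∀ i x, ‖g i x‖ ≤ ‖f i x‖) : UniformIntegrable g p μ := by
  have hind : ∀ i (s : Set α) x, ‖s.indicator (g i) x‖ ≤ ‖s.indicator (f i) x‖ := fun i s x => by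
    by_cases hx : x ∈ s <;> simp [hx, hgf]
  obtain ⟨-, hunif, C, hC⟩ := hf
  refine ⟨hg, fun ε hε => ?_, C, fun i => (eLpNorm_mono (hgf i)).trans (hC i)⟩
  obtain ⟨δ, hδ, hδf⟩ := hunif hε
  exact ⟨δ, hδ, fun i s hs hμs => (eLpNorm_mono (hind i s)).trans (hδf i s hs hμs)⟩

lemma UniformIntegrable.tendsto_integral_of_ae_tendsto [NormedSpace ℝ E] [IsFiniteMeasure μ]
    {f : ℕ → α → E} {g : α → E} (hf : UniformIntegrable f 1 μ)
    (hfg : ∀ᵐ x ∂μ, Tendsto (fun n => f n x) atTop (𝓝 (g x))) :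
    Tendsto (fun n => ∫ x, f n x ∂μ) atTop (𝓝 (∫ x, g x ∂μ)) := by
  have hg : MemLp g 1 μ := hf.memLp_of_ae_tendsto hfg
  exact tendsto_integral_of_L1' g hg.aestronglyMeasurable
    (.of_forall fun n => memLp_one_iff_integrable.1 (hf.memLp n))
    (tendsto_Lp_finite_of_tendsto_ae le_rfl ENNReal.one_ne_top hf.aestronglyMeasurable hg
      hf.unifIntegrable hfg)

end MeasureTheory

section ProductMoments

variable {Ω ι : Type*} [MeasurableSpace Ω] {P : Measure Ω} [Fintype ι] [Nonempty ι]
  {f : ι → Ω → ℝ}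

lemma integrable_prod_of_integrable_abs_pow (hf : ∀ i, AEStronglyMeasurable (f i) P)
    (hint : ∀ i, Integrable (fun ω => |f i ω| ^ Fintype.card ι) P) :
    Integrable (fun ω => ∏ i, f i ω) P :=
  (integrable_finsetSum _ fun i _ => hint i).mono' (by fun_prop)
    (.of_forall fun ω => (Real.norm_eq_abs _).trans_le (abs_prod_le_sum_abs_pow fun i => f i ω))

lemma abs_integral_prod_le_sum (hint : ∀ i, Integrable (fun ω => |f i ω| ^ Fintype.card ι) P) :
    |∫ ω, ∏ i, f i ω ∂P| ≤ ∑ i, ∫ ω, |f i ω| ^ Fintype.card ι ∂P := by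
  rw [← Real.norm_eq_abs, ← integral_finsetSum _ fun i _ => hint i]
  exact norm_integral_le_of_norm_le (integrable_finsetSum _ fun i _ => hint i)
    (.of_forall fun ω => abs_prod_le_sum_abs_pow fun i => f i ω)

end ProductMoments

namespace IsExchangeable

variable {Ω : Type*} [MeasurableSpace Ω] {P : Measure Ω} {Y : ℕ → Ω → ℝ} {r : ℕ}

lemma identDistrib_comp_injective (hexch : IsExchangeable P Y) (hY : ∀ n, Measurable (Y n))
    (p : Fin r → ℕ) (hp : Injective p) :
    IdentDistrib (fun ω (i : Fin r) => Y (p i) ω) (fun ω (i : Fin r) => Y i ω) P P := by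
  obtain ⟨σ, hσ, hσp⟩ := exists_perm_finite_eq_of_injective p hp
  have hperm : IdentDistrib (fun ω n => Y (σ n) ω) (fun ω n => Y n ω) P P :=
    ⟨(measurable_pi_lambda _ fun n => hY (σ n)).aemeasurable,
      (measurable_pi_lambda _ hY).aemeasurable, hexch σ hσ⟩
  simpa [comp_def, hσp] using
    hperm.comp (u := fun (x : ℕ → ℝ) (i : Fin r) => x i) (by fun_prop)

lemma identDistrib (hexch : IsExchangeable P Y) (hY : ∀ n, Measurable (Y n)) (k : ℕ) :
    IdentDistrib (Y k) (Y 0) P P := by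
  simpa [comp_def] using (hexch.identDistrib_comp_injective hY (fun _ : Fin 1 => k)
    (injective_of_subsingleton _)).comp (measurable_pi_apply 0)

lemma integral_prod_of_injective (hexch : IsExchangeable P Y) (hY : ∀ n, Measurable (Y n))
    (p : Fin r → ℕ) (hp : Injective p) :
    ∫ ω, ∏ i, Y (p i) ω ∂P = ∫ ω, ∏ k ∈ range r, Y k ω ∂P := by
  simpa [← Fin.prod_univ_eq_prod_range] using
    ((hexch.identDistrib_comp_injective hY p hp).comp
      (u := fun x : Fin r → ℝ => ∏ i, x i) (by fun_prop)).integral_eq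

lemma identDistrib_abs_pow (hexch : IsExchangeable P Y) (hY : ∀ n, Measurable (Y n)) (k : ℕ) :
    IdentDistrib (fun ω => |Y k ω| ^ r) (fun ω => |Y 0 ω| ^ r) P P :=
  (hexch.identDistrib hY k).comp (u := fun x => |x| ^ r) (by fun_prop)

lemma uniformIntegrable_mean_pow [IsFiniteMeasure P] (hexch : IsExchangeable P Y)
    (hY : ∀ n, Measurable (Y n)) (hr : r ≠ 0) (hint : Integrable (fun ω => |Y 0 ω| ^ r) P) :
    UniformIntegrable (fun (N : ℕ) ω => ((∑ k ∈ range N, Y k ω) / N) ^ r) 1 P := by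
  have hUI : UniformIntegrable (fun k ω => |Y k ω| ^ r) 1 P :=
    MemLp.uniformIntegrable_of_identDistrib le_rfl ENNReal.one_ne_top
      (memLp_one_iff_integrable.2 hint) (hexch.identDistrib_abs_pow hY)
  refine (uniformIntegrable_average_real le_rfl hUI).of_norm_le
    (fun N => by fun_prop) fun N ω => ?_
  simp only [Real.norm_eq_abs, Pi.div_apply, Finset.sum_apply, Pi.natCast_apply]
  exact (abs_mean_pow_le_mean_abs_pow (fun k => Y k ω) N hr).trans (le_abs_self _)

lemma tendsto_integral_mean_pow (hexch : IsExchangeable P Y)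
    (hY : ∀ n, Measurable (Y n)) (hr : r ≠ 0) (hint : Integrable (fun ω => |Y 0 ω| ^ r) P) :
    Tendsto (fun N : ℕ => ∫ ω, ((∑ k ∈ range N, Y k ω) / N) ^ r ∂P) atTop
      (𝓝 (∫ ω, ∏ k ∈ range r, Y k ω ∂P)) := by
  have : NeZero r := ⟨hr⟩
  set C := ∫ ω, |Y 0 ω| ^ r ∂P
  set I := ∫ ω, ∏ k ∈ range r, Y k ω ∂P
  have hint' : ∀ p : Fin r → ℕ, ∀ i, Integrable (fun ω => |Y (p i) ω| ^ Fintype.card (Fin r)) P :=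
    fun p i => by simpa using (hexch.identDistrib_abs_pow hY (p i)).integrable_iff.2 hint
  have hmoment : ∀ p : Fin r → ℕ, |∫ ω, ∏ i, Y (p i) ω ∂P - I| ≤ r * C + |I| := fun p => by
    have hC : ∀ k, ∫ ω, |Y k ω| ^ r ∂P = C := fun k => (hexch.identDistrib_abs_pow hY k).integral_eq
    have := abs_integral_prod_le_sum (hint' p)
    simp only [Fintype.card_fin, hC, sum_const, card_univ, nsmul_eq_mul] at this
    exact (abs_sub _ _).trans (by gcongr)
  have hexpand : ∀ N : ℕ, ∫ ω, ((∑ k ∈ range N, Y k ω) / N) ^ r ∂P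
      = ((N : ℝ) ^ r)⁻¹ * ∑ p : Fin r → Fin N, ∫ ω, ∏ i, Y (p i) ω ∂P := fun N => by
    simp_rw [mean_pow_eq_inv_pow_mul_sum]
    rw [integral_const_mul, integral_finsetSum _ fun p _ =>
      integrable_prod_of_integrable_abs_pow (fun i => (hY _).aestronglyMeasurable) (hint' _)]
  simp_rw [hexpand]
  exact tendsto_inv_pow_mul_sum_of_injective (m := fun p => ∫ ω, ∏ i, Y (p i) ω ∂P)
    (hexch.integral_prod_of_injective hY) hmoment

end IsExchangeable

theorem exchangeable_limit_power_eq_product_moment_general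
    {Ω : Type*} [MeasurableSpace Ω] (P : Measure Ω) [IsProbabilityMeasure P]
    (Y : ℕ → Ω → ℝ) (hYmeas : ∀ n, Measurable (Y n))
    (hexch : IsExchangeable P Y)
    (r : ℕ) (hr : 1 ≤ r)
    (hint : Integrable (fun ω => |Y 0 ω| ^ r) P)
    (Yinf : Ω → ℝ)
    (hlim : ∀ᵐ ω ∂P, Filter.Tendsto (fun N => (∑ k ∈ Finset.range N, Y k ω) / N)
      Filter.atTop (nhds (Yinf ω))) :
    ∫ ω, Yinf ω ^ r ∂P = ∫ ω, ∏ k ∈ Finset.range r, Y k ω ∂P := by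
  have hr0 : r ≠ 0 := Nat.one_le_iff_ne_zero.1 hr
  exact tendsto_nhds_unique
    ((hexch.uniformIntegrable_mean_pow hYmeas hr0 hint).tendsto_integral_of_ae_tendsto
      (hlim.mono fun ω h => h.pow r))
    (hexch.tendsto_integral_mean_pow hYmeas hr0 hint)

theorem exchangeable_limit_power_eq_product_moment
    {Ω : Type*} [MeasurableSpace Ω] (P : Measure Ω) [IsProbabilityMeasure P]
    (Y : ℕ → Ω → ℝ) (hYmeas : ∀ n, Measurable (Y n))
    (hexch : IsExchangeable P Y)
    (r : ℕ) (hr : 1 ≤ r)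
    (hint : Integrable (fun ω => |Y 0 ω| ^ r) P)
    (Yinf : Ω → ℝ) (hYinfMeas : Measurable Yinf)
    (hlim : ∀ᵐ ω ∂P, Filter.Tendsto (fun N => (∑ k ∈ Finset.range N, Y k ω) / N)
      Filter.atTop (nhds (Yinf ω))) :
    ∫ ω, Yinf ω ^ r ∂P = ∫ ω, ∏ k ∈ Finset.range r, Y k ω ∂P :=
  exchangeable_limit_power_eq_product_moment_general P Y hYmeas hexch r hr hint Yinf hlim
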